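/- arXiv:0904.0319 — 9 statements merged into one kernel-verified Lean document; each statement's English description precedes it below -/
import Mathlib

section
/- Let [φ] ∈ (ℂ/ℤ)^n have toric degree r with toric vectors θ^(1),…,θ^(r) ∈ ℤ^n and toric coefficients α_1,…,α_r ∈ ℂ. Then α_1,…,α_r are rationally independent, i.e., if c_1,…,c_r ∈ ℤ satisfy c_1α_1 + ⋯ + c_rα_r = 0 then c_1 = ⋯ = c_r = 0. -/
open scoped BigOperators
open Complex

noncomputable section

/-- `φ` (a representative of a class in `(ℂ/ℤ)^n`) is represented by toric
coefficients `α` and toric vectors `θ`, i.e. `[φ] = [∑ k, α k • θ k]`. -/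
def IsToricRep {n r : ℕ} (φ : Fin n → ℂ) (α : Fin r → ℂ) (θ : Fin r → Fin n → ℤ) : Prop :=
  ∀ j, ∃ m : ℤ, φ j - ∑ k, α k * (θ k j : ℂ) = (m : ℂ)

/-- `[φ]` has toric degree `r`: `r` is the minimal length of a toric representation. -/
def HasToricDegree {n : ℕ} (φ : Fin n → ℂ) (r : ℕ) : Prop :=
  (∃ (α : Fin r → ℂ) (θ : Fin r → Fin n → ℤ), IsToricRep φ α θ) ∧
  ∀ s : ℕ, (∃ (α : Fin s → ℂ) (θ : Fin s → Fin n → ℤ), IsToricRep φ α θ) → r ≤ s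

/-- `α₁, …, α_r` are rationally independent together with `1`. -/
def RatIndepWithOne {r : ℕ} (α : Fin r → ℂ) : Prop :=
  ∀ (c0 : ℤ) (c : Fin r → ℤ), (c0 : ℂ) + ∑ k, (c k : ℂ) * α k = 0 → c0 = 0 ∧ ∀ k, c k = 0

/-- `α₁, …, α_r` are rationally independent. -/
def RatIndep {r : ℕ} (α : Fin r → ℂ) : Prop :=
  ∀ c : Fin r → ℤ, ∑ k, (c k : ℂ) * α k = 0 → ∀ k, c k = 0

/-- Additive resonances of `θ ∈ ℤ^n` relative to the `j`-th coordinate. -/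
def ResPlus {n : ℕ} (θ : Fin n → ℤ) (j : Fin n) : Set (Fin n → ℕ) :=
  {Q | 2 ≤ ∑ h, Q h ∧ ∑ h, (Q h : ℤ) * θ h = θ j}

/-- Multiplicative resonances of `[φ] ∈ (ℂ/ℤ)^n` relative to the `j`-th coordinate. -/
def ResMod {n : ℕ} (φ : Fin n → ℂ) (j : Fin n) : Set (Fin n → ℕ) :=
  {Q | 2 ≤ ∑ h, Q h ∧ ∃ m : ℤ, (∑ h, (Q h : ℂ) * φ h) - φ j = (m : ℂ)}

/-- Toric coefficients of a minimal toric representation are rationally independent. -/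
theorem stmt4 (n r : ℕ) (φ : Fin n → ℂ) (hdeg : HasToricDegree φ r)
    (α : Fin r → ℂ) (θ : Fin r → Fin n → ℤ) (hrep : IsToricRep φ α θ)
    (c : Fin r → ℤ) (hc : ∑ k, (c k : ℂ) * α k = 0) :
    ∀ k, c k = 0 := by
  by_contra h
  push_neg at h
  obtain ⟨k₀, hk₀⟩ := h
  have hr : r ≠ 0 := fun h => by subst h; exact k₀.elim0
  obtain ⟨r', rfl⟩ := Nat.exists_eq_succ_of_ne_zero hr
  set σ := k₀.succAbove with hσ
  have hcne : (c k₀ : ℂ) ≠ 0 := Int.cast_ne_zero.mpr hk₀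
  set α' : Fin r' → ℂ := fun i => α (σ i) / (c k₀ : ℂ) with hα'
  set θ' : Fin r' → Fin n → ℤ := fun i j => c k₀ * θ (σ i) j - c (σ i) * θ k₀ j with hθ'
  have hrel : (c k₀ : ℂ) * α k₀ + ∑ i, (c (σ i) : ℂ) * α (σ i) = 0 := by
    rw [← hc, Fin.sum_univ_succAbove (fun k => (c k : ℂ) * α k) k₀]
  have hrep' : IsToricRep φ α' θ' := by
    intro j
    obtain ⟨m, hm⟩ := hrep j
    refine ⟨m, ?_⟩
    have hsum : ∑ i, α' i * (θ' i j : ℂ) = ∑ k, α k * (θ k j : ℂ) := by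
      rw [Fin.sum_univ_succAbove (fun k => α k * (θ k j : ℂ)) k₀]
      have key : ∀ i, α' i * (θ' i j : ℂ)
          = α (σ i) * (θ (σ i) j : ℂ) - ((c (σ i) : ℂ) * α (σ i)) * ((θ k₀ j : ℂ) / (c k₀ : ℂ)) := by
        intro i
        simp only [hα', hθ']
        push_cast
        field_simp
      rw [Finset.sum_congr rfl (fun i _ => key i), Finset.sum_sub_distrib, ← Finset.sum_mul]
      have h2 : ∑ i, (c (σ i) : ℂ) * α (σ i) = -((c k₀ : ℂ) * α k₀) := by
        linear_combination hrel
      rw [h2]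
      field_simp
      ring
    rw [hsum]; exact hm
  have := hdeg.2 r' ⟨α', θ', hrep'⟩
  omega
end
end

section
/- Let [φ] ∈ (ℂ/ℤ)^n have toric degree r with toric vectors θ^(1),…,θ^(r) ∈ ℤ^n. Then θ^(1),…,θ^(r) are ℚ-linearly independent; in particular, the n×r integer matrix Θ whose columns are the θ^(k) has maximal rank r. -/
open scoped BigOperators
open Complex

noncomputable section

/- If the toric vectors satisfied a rational relation `∑ c_k θ^(k) = 0` with `c_{k₀} ≠ 0`, then
`θ^(k₀)` could be eliminated: `∑ α_k θ^(k) = ∑_{k ≠ k₀} (α_k - α_{k₀} c_k / c_{k₀}) θ^(k)`, giving a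
toric representation of `[φ]` with `r - 1` vectors and contradicting minimality. -/

theorem Fin.sum_smul_eq_sum_succAbove_of_sum_smul_eq_zero {K M : Type*} [Field K]
    [AddCommGroup M] [Module K M] {m : ℕ} (v : Fin (m + 1) → M) {c : Fin (m + 1) → K}
    (hc : ∑ k, c k • v k = 0) {k₀ : Fin (m + 1)} (hk₀ : c k₀ ≠ 0) (a : Fin (m + 1) → K) :
    ∑ k, a k • v k =
      ∑ i, (a (k₀.succAbove i) - a k₀ * c (k₀.succAbove i) / c k₀) • v (k₀.succAbove i) := by
  rw [Fin.sum_univ_succAbove _ k₀] at hc ⊢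
  have hrest : ∑ i, c (k₀.succAbove i) • v (k₀.succAbove i) = -(c k₀ • v k₀) :=
    eq_neg_of_add_eq_zero_right hc
  simp only [sub_smul, Finset.sum_sub_distrib, mul_div_right_comm, mul_smul, ← Finset.smul_sum,
    hrest, smul_neg]
  rw [← mul_smul, div_mul_cancel₀ _ hk₀]
  abel

theorem IsToricRep.exists_of_not_linearIndependent {n m : ℕ} {φ : Fin n → ℂ}
    {α : Fin (m + 1) → ℂ} {θ : Fin (m + 1) → Fin n → ℤ} (hrep : IsToricRep φ α θ)
    (hθ : ¬LinearIndependent ℚ fun k j => (θ k j : ℚ)) :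
    ∃ (β : Fin m → ℂ) (θ' : Fin m → Fin n → ℤ), IsToricRep φ β θ' := by
  obtain ⟨c, hc, k₀, hk₀⟩ := Fintype.not_linearIndependent_iff.mp hθ
  have hcℂ : ∑ k, (c k : ℂ) • (fun j => (θ k j : ℂ)) = 0 := by
    ext j
    simpa using congr(((($hc) j : ℚ) : ℂ))
  have hrel := Fin.sum_smul_eq_sum_succAbove_of_sum_smul_eq_zero _ hcℂ
    (Rat.cast_ne_zero.mpr hk₀) α
  refine ⟨fun i => α (k₀.succAbove i) - α k₀ * c (k₀.succAbove i) / c k₀,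
    fun i => θ (k₀.succAbove i), fun j => ?_⟩
  have hj := congr_fun hrel j
  simp only [Finset.sum_apply, Pi.smul_apply, smul_eq_mul] at hj
  simpa only [← hj] using hrep j

/-- Toric vectors of a minimal toric representation are `ℚ`-linearly independent; in
particular the matrix `Θ` with columns `θ^(k)` has maximal rank `r`. -/
theorem stmt5 (n r : ℕ) (φ : Fin n → ℂ) (hdeg : HasToricDegree φ r)
    (α : Fin r → ℂ) (θ : Fin r → Fin n → ℤ) (hrep : IsToricRep φ α θ) :
    LinearIndependent ℚ (fun k : Fin r => fun j : Fin n => (θ k j : ℚ)) ∧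
    (Matrix.of fun (j : Fin n) (k : Fin r) => (θ k j : ℚ)).rank = r := by
  have hli : LinearIndependent ℚ (fun k : Fin r => fun j : Fin n => (θ k j : ℚ)) := by
    by_contra hθ
    obtain _ | m := r
    · exact hθ linearIndependent_empty_type
    obtain ⟨β, θ', hrep'⟩ := hrep.exists_of_not_linearIndependent hθ
    exact (hdeg.2 m ⟨β, θ', hrep'⟩).not_gt m.lt_succ_self
  refine ⟨hli, ?_⟩
  rw [← Matrix.rank_transpose]
  exact hli.rank_matrix.trans (Fintype.card_fin r)
end
end

section
/- Let [φ] ∈ (ℂ/ℤ)^n have toric degree r ≥ 1 and admit toric vectors θ^(1),…,θ^(r) with toric coefficients α_1,…,α_r ∈ ℂ that are rationally dependent with 1. Then there exist toric vectors η^(1),…,η^(r) for [φ] with toric coefficients β_1,…,β_r such that β_1 = 1/m for some integer m ≥ 2 with gcd(m, η^(1)_1, …, η^(1)_n) = 1, and β_2,…,β_r,1 are rationally independent. -/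
open scoped BigOperators
open Complex

noncomputable section

/-! Solve the rational relation for a coefficient `α J` with `c J ≠ 0`: this rewrites
`∑ α k • θ k` as `r - 1` toric terms plus the rational vector `(c₀ / c J) • θ J`, which written in
lowest terms `η / m` becomes a first toric term with coefficient `1 / m`. Minimality of `r` forces
`m ≥ 2` (for `m = 1` that term is integral and can be dropped), and it makes the coefficients of
every representation of length `r` rationally independent; with `β 0 = 1 / m` this is the
independence of `β 1, …, β (r - 1)` together with `1`. -/

theorem Int.exists_coprime_mul_eq_mul {ι : Type*} [Fintype ι] {a : ℤ} (ha : a ≠ 0) (v : ι → ℤ) :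
    ∃ (m : ℕ) (w : ι → ℤ), 0 < m ∧ Nat.gcd m (Finset.univ.gcd fun i => (w i).natAbs) = 1 ∧
      ∀ i, w i * a = v i * m := by
  set G := Nat.gcd a.natAbs (Finset.univ.gcd fun i => (v i).natAbs)
  have hG : 0 < G := Nat.gcd_pos_of_pos_left _ (Int.natAbs_pos.mpr ha)
  have hGa : G ∣ a.natAbs := Nat.gcd_dvd_left _ _
  have hGv : ∀ i, G ∣ (v i).natAbs :=
    fun i => (Nat.gcd_dvd_right _ _).trans (Finset.gcd_dvd (Finset.mem_univ i))
  set m := a.natAbs / G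
  set w : ι → ℤ := fun i => a.sign * v i / G
  have hGm : G * m = a.natAbs := Nat.mul_div_cancel' hGa
  have hGw : ∀ i, (G : ℤ) * w i = a.sign * v i :=
    fun i => Int.mul_ediv_cancel' ((Int.natCast_dvd.mpr (hGv i)).mul_left _)
  have hGw_abs : ∀ i, G * (w i).natAbs = (v i).natAbs := fun i => by
    simpa [Int.natAbs_mul, Int.natAbs_sign_of_ne_zero ha] using congrArg Int.natAbs (hGw i)
  refine ⟨m, w, Nat.div_pos (Nat.le_of_dvd (Int.natAbs_pos.mpr ha) hGa) hG, ?_, fun i => ?_⟩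
  · -- `d * G` divides `a` and every `v i`, hence divides `G`
    set d := Nat.gcd m (Finset.univ.gcd fun i => (w i).natAbs)
    have hdG : d * G ∣ 1 * G := by
      rw [one_mul, mul_comm]
      refine Nat.dvd_gcd (hGm ▸ Nat.mul_dvd_mul_left G (Nat.gcd_dvd_left _ _))
        (Finset.dvd_gcd fun i _ => hGw_abs i ▸ Nat.mul_dvd_mul_left G
          ((Nat.gcd_dvd_right _ _).trans (Finset.gcd_dvd (Finset.mem_univ i))))
    exact Nat.dvd_one.mp (Nat.dvd_of_mul_dvd_mul_right hG hdG)
  · have hGZ : (G : ℤ) ≠ 0 := by exact_mod_cast hG.ne'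
    apply mul_left_cancel₀ hGZ
    have hGmZ : (G : ℤ) * m = a.natAbs := by exact_mod_cast hGm
    calc (G : ℤ) * (w i * a) = v i * (a.sign * a) := by rw [← mul_assoc, hGw]; ring
      _ = G * (v i * m) := by rw [Int.sign_mul_self_eq_natAbs, ← hGmZ]; ring

theorem IsToricRep.of_sum_eq_add_int {n r s : ℕ} {φ : Fin n → ℂ} {β : Fin r → ℂ}
    {η : Fin r → Fin n → ℤ} {β' : Fin s → ℂ} {η' : Fin s → Fin n → ℤ} (h : IsToricRep φ β η)
    (hsum : ∀ i, ∃ z : ℤ, ∑ k, β k * (η k i : ℂ) = ∑ k, β' k * (η' k i : ℂ) + z) :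
    IsToricRep φ β' η' := by
  intro i
  obtain ⟨z₀, hz₀⟩ := h i
  obtain ⟨z, hz⟩ := hsum i
  exact ⟨z₀ + z, by push_cast; rw [← hz₀, hz]; ring⟩

theorem Fin.sum_mul_eq_eliminate {n s : ℕ} (β : Fin (s + 1) → ℂ) (η : Fin (s + 1) → Fin n → ℤ)
    {e : Fin (s + 1) → ℤ} {J : Fin (s + 1)} (hJ : e J ≠ 0) (i : Fin n) :
    ∑ k, β k * (η k i : ℂ) =
      ∑ l, β (J.succAbove l) / e J *
          ((e J * η (J.succAbove l) i - e (J.succAbove l) * η J i : ℤ) : ℂ) +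
        (∑ k, (e k : ℂ) * β k) * η J i / e J := by
  have heJ : (e J : ℂ) ≠ 0 := by exact_mod_cast hJ
  have hterm : ∀ l, β (J.succAbove l) / e J *
      ((e J * η (J.succAbove l) i - e (J.succAbove l) * η J i : ℤ) : ℂ) =
        β (J.succAbove l) * η (J.succAbove l) i -
          e (J.succAbove l) * β (J.succAbove l) * (η J i / e J) := by
    intro l
    push_cast
    field_simp
  rw [Finset.sum_congr rfl fun l _ => hterm l, Finset.sum_sub_distrib, ← Finset.sum_mul,
    Fin.sum_univ_succAbove _ J, Fin.sum_univ_succAbove (fun k => (e k : ℂ) * β k) J]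
  field_simp
  ring

theorem IsToricRep.eliminate {n s : ℕ} {φ : Fin n → ℂ} {β : Fin (s + 1) → ℂ}
    {η : Fin (s + 1) → Fin n → ℤ} (h : IsToricRep φ β η) {e : Fin (s + 1) → ℤ} {J : Fin (s + 1)}
    (hJ : e J ≠ 0) (hint : ∀ i, ∃ z : ℤ, (∑ k, (e k : ℂ) * β k) * η J i / e J = z) :
    IsToricRep φ (fun l => β (J.succAbove l) / e J)
      (fun l i => e J * η (J.succAbove l) i - e (J.succAbove l) * η J i) :=
  h.of_sum_eq_add_int fun i => by
    obtain ⟨z, hz⟩ := hint i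
    exact ⟨z, by rw [Fin.sum_mul_eq_eliminate β η hJ i, hz]⟩

theorem HasToricDegree.ratIndep {n r : ℕ} {φ : Fin n → ℂ} (hdeg : HasToricDegree φ r)
    {β : Fin r → ℂ} {η : Fin r → Fin n → ℤ} (h : IsToricRep φ β η) : RatIndep β := by
  intro e he
  by_contra! hne
  obtain ⟨J, hJ⟩ := hne
  obtain ⟨s, rfl⟩ : ∃ s, r = s + 1 := Nat.exists_eq_add_one_of_ne_zero (J.pos.ne')
  have := hdeg.2 s ⟨_, _, h.eliminate hJ fun i => ⟨0, by simp [he]⟩⟩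
  omega

theorem HasToricDegree.exists_isToricRep_head_eq_inv {n s : ℕ} {φ : Fin n → ℂ}
    (hdeg : HasToricDegree φ (s + 1)) {α : Fin (s + 1) → ℂ} {θ : Fin (s + 1) → Fin n → ℤ}
    (hrep : IsToricRep φ α θ) {c : Fin (s + 1) → ℤ} {c0 : ℤ} (hc : ∃ J, c J ≠ 0)
    (hsum : ∑ k, (c k : ℂ) * α k = c0) :
    ∃ (β : Fin (s + 1) → ℂ) (η : Fin (s + 1) → Fin n → ℤ) (m : ℕ), 2 ≤ m ∧
      IsToricRep φ β η ∧ β 0 = 1 / (m : ℂ) ∧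
      Nat.gcd m (Finset.univ.gcd fun j => (η 0 j).natAbs) = 1 := by
  obtain ⟨J, hJ⟩ := hc
  obtain ⟨m, w, hm, hcop, hw⟩ := Int.exists_coprime_mul_eq_mul hJ fun i => c0 * θ J i
  have hfrac : ∀ i, (∑ k, (c k : ℂ) * α k) * θ J i / c J = w i / m := fun i => by
    rw [hsum, div_eq_div_iff (by exact_mod_cast hJ) (by exact_mod_cast hm.ne')]
    exact_mod_cast (hw i).symm
  have hm2 : 2 ≤ m := by
    by_contra! hlt
    obtain rfl : m = 1 := by omega
    have := hdeg.2 s ⟨_, _, hrep.eliminate hJ fun i => ⟨w i, by simp [hfrac]⟩⟩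
    omega
  refine ⟨Fin.cons (1 / (m : ℂ)) fun l => α (J.succAbove l) / c J,
    Fin.cons w fun l i => c J * θ (J.succAbove l) i - c (J.succAbove l) * θ J i, m, hm2,
    hrep.of_sum_eq_add_int fun i => ⟨0, ?_⟩, rfl, hcop⟩
  rw [Fin.sum_mul_eq_eliminate α θ hJ i, hfrac, Fin.sum_univ_succ]
  simp only [Fin.cons_zero, Fin.cons_succ]
  push_cast
  ring

theorem RatIndep.eq_zero_of_head_eq_inv {s : ℕ} {β : Fin (s + 1) → ℂ} (hβ : RatIndep β)
    {m : ℕ} (hm : m ≠ 0) (h0 : β 0 = 1 / (m : ℂ)) (c0 : ℤ) (c : Fin (s + 1) → ℤ) (hc : c 0 = 0)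
    (hsum : (c0 : ℂ) + ∑ k, (c k : ℂ) * β k = 0) : c0 = 0 ∧ ∀ k, c k = 0 := by
  have hzero := hβ (Function.update c 0 (m * c0)) <| by
    rw [Fin.sum_univ_succ] at hsum ⊢
    simp only [Function.update_self, Function.update_of_ne (Fin.succ_ne_zero _), h0, hc]
      at hsum ⊢
    push_cast at hsum ⊢
    field_simp
    linear_combination hsum
  refine ⟨by simpa [hm] using hzero 0, fun k => ?_⟩
  rcases eq_or_ne k 0 with rfl | hk
  · exact hc
  · simpa [hk] using hzero k

/-- If the toric coefficients of a minimal toric representation are rationally dependent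
with `1`, then `[φ]` admits a reduced toric representation. -/
theorem stmt6 (n r : ℕ) (hr : 0 < r) (φ : Fin n → ℂ) (hdeg : HasToricDegree φ r)
    (α : Fin r → ℂ) (θ : Fin r → Fin n → ℤ) (hrep : IsToricRep φ α θ)
    (hdep : ∃ (c : Fin r → ℤ) (c0 : ℤ), (¬ (c0 = 0 ∧ ∀ k, c k = 0)) ∧
      ∑ k, (c k : ℂ) * α k = (c0 : ℂ)) :
    ∃ (β : Fin r → ℂ) (η : Fin r → Fin n → ℤ) (m : ℕ), 2 ≤ m ∧
      IsToricRep φ β η ∧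
      β ⟨0, hr⟩ = 1 / (m : ℂ) ∧
      Nat.gcd m (Finset.univ.gcd fun j => (η ⟨0, hr⟩ j).natAbs) = 1 ∧
      (∀ (c0 : ℤ) (c : Fin r → ℤ), c ⟨0, hr⟩ = 0 →
        (c0 : ℂ) + ∑ k, (c k : ℂ) * β k = 0 → c0 = 0 ∧ ∀ k, c k = 0) := by
  obtain ⟨s, rfl⟩ := Nat.exists_eq_add_one_of_ne_zero hr.ne'
  obtain ⟨c, c0, hne, hsum⟩ := hdep
  have hc : ∃ J, c J ≠ 0 := by
    by_contra! hc
    exact hne ⟨by exact_mod_cast (by simpa [hc] using hsum.symm : (c0 : ℂ) = 0), hc⟩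
  obtain ⟨β, η, m, hm, hβη, h0, hcop⟩ := hdeg.exists_isToricRep_head_eq_inv hrep hc hsum
  exact ⟨β, η, m, hm, hβη, h0, hcop,
    (hdeg.ratIndep hβη).eq_zero_of_head_eq_inv (by omega) h0⟩
end
end

section
/- Let [φ] ∈ (ℂ/ℤ)^n have toric degree r, and suppose some r-tuple of toric vectors for [φ] has toric coefficients α_1,…,α_r rationally independent with 1. Then every r-tuple of toric vectors for [φ] has toric coefficients rationally independent with 1. -/
open scoped BigOperators
open Complex

noncomputable section

lemma ratIndepWithOne_iff_li {r : ℕ} (α : Fin r → ℂ) :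
    RatIndepWithOne α ↔ LinearIndependent ℚ (Fin.cons (1:ℂ) α) := by
  rw [← LinearIndependent.iff_fractionRing (R := ℤ) (K := ℚ), Fintype.linearIndependent_iff]
  constructor
  · intro h c hc
    rw [Fin.sum_univ_succ] at hc
    simp only [Fin.cons_zero, Fin.cons_succ, zsmul_eq_mul, mul_one] at hc
    obtain ⟨h0, hs⟩ := h (c 0) (fun k => c k.succ) hc
    intro i
    exact Fin.cases h0 hs i
  · intro h c0 c hc
    have := h (Fin.cons c0 c) (by
      rw [Fin.sum_univ_succ]
      simpa [zsmul_eq_mul] using hc)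
    exact ⟨this 0, fun k => this k.succ⟩

lemma toric_rows_li {n r : ℕ} (φ : Fin n → ℂ) (hdeg : HasToricDegree φ r)
    (α : Fin r → ℂ) (θ : Fin r → Fin n → ℤ) (hrep : IsToricRep φ α θ) :
    LinearIndependent ℚ (fun k => fun j => (θ k j : ℚ)) := by
  by_contra hdep
  rw [Fintype.not_linearIndependent_iff] at hdep
  obtain ⟨g, hg0, k0, hk0⟩ := hdep
  have hrel : ∀ j, ∑ k, (g k : ℂ) * (θ k j : ℂ) = 0 := by
    intro j
    have h1 := congrFun hg0 j
    simp only [Finset.sum_apply, Pi.smul_apply, smul_eq_mul, Pi.zero_apply] at h1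
    have h2 : ((∑ k, g k * (θ k j : ℚ) : ℚ) : ℂ) = 0 := by rw [h1]; simp
    push_cast at h2
    exact h2
  cases r with
  | zero => exact k0.elim0
  | succ m =>
    have hle := hdeg.2 m ⟨fun i => α (k0.succAbove i) -
        ((g (k0.succAbove i) / g k0 : ℚ) : ℂ) * α k0,
      fun i => θ (k0.succAbove i), ?_⟩
    · omega
    · intro j
      obtain ⟨M, hM⟩ := hrep j
      refine ⟨M, ?_⟩
      rw [← hM]
      have hgk0 : ((g k0 : ℚ) : ℂ) ≠ 0 := by
        simpa using hk0
      have h1 := hrel j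
      rw [Fin.sum_univ_succAbove (fun k => (g k : ℂ) * (θ k j : ℂ)) k0] at h1
      have h2 : ∑ i, (g (k0.succAbove i) : ℂ) * (θ (k0.succAbove i) j : ℂ)
          = -((g k0 : ℂ) * (θ k0 j : ℂ)) := by linear_combination h1
      have h3 : ∑ i, (α (k0.succAbove i) - ((g (k0.succAbove i) / g k0 : ℚ) : ℂ) * α k0) *
            (θ (k0.succAbove i) j : ℂ)
          = ∑ k, α k * (θ k j : ℂ) := by
        rw [Fin.sum_univ_succAbove (fun k => α k * (θ k j : ℂ)) k0]
        push_cast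
        calc ∑ i, (α (k0.succAbove i) - (g (k0.succAbove i) : ℂ) / (g k0 : ℂ) * α k0) *
              (θ (k0.succAbove i) j : ℂ)
            = ∑ i, (α (k0.succAbove i) * (θ (k0.succAbove i) j : ℂ) -
                (α k0 / (g k0 : ℂ)) * ((g (k0.succAbove i) : ℂ) * (θ (k0.succAbove i) j : ℂ))) := by
              apply Finset.sum_congr rfl; intros; ring
          _ = (∑ i, α (k0.succAbove i) * (θ (k0.succAbove i) j : ℂ)) -
                (α k0 / (g k0 : ℂ)) * ∑ i, (g (k0.succAbove i) : ℂ) * (θ (k0.succAbove i) j : ℂ) := by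
              rw [Finset.sum_sub_distrib, Finset.mul_sum]
          _ = α k0 * (θ k0 j : ℂ) + ∑ i, α (k0.succAbove i) * (θ (k0.succAbove i) j : ℂ) := by
              rw [h2]; field_simp; ring
      rw [h3]

/-- If one minimal toric representation of `[φ]` has coefficients rationally independent
with `1`, then every such representation does. -/
theorem stmt7 (n r : ℕ) (φ : Fin n → ℂ) (hdeg : HasToricDegree φ r)
    (α : Fin r → ℂ) (θ : Fin r → Fin n → ℤ) (hrep : IsToricRep φ α θ)
    (hindep : RatIndepWithOne α)
    (β : Fin r → ℂ) (η : Fin r → Fin n → ℤ) (hrep' : IsToricRep φ β η) :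
    RatIndepWithOne β := by
  rw [ratIndepWithOne_iff_li] at hindep ⊢
  have hθ := toric_rows_li φ hdeg α θ hrep
  -- a left inverse for the map x ↦ ∑ k, x k • (θ k ·)
  set F : (Fin r → ℚ) →ₗ[ℚ] (Fin n → ℚ) :=
    { toFun := fun x => fun j => ∑ k, x k * (θ k j : ℚ)
      map_add' := by
        intro x y; funext j
        simp [add_mul, Finset.sum_add_distrib]
      map_smul' := by
        intro c x; funext j
        simp [Finset.mul_sum, mul_assoc] } with hF
  have hFinj : LinearMap.ker F = ⊥ := by
    rw [LinearMap.ker_eq_bot']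
    intro x hx
    have hx' : ∑ k, x k • (fun j => (θ k j : ℚ)) = 0 := by
      funext j
      have := congrFun hx j
      simpa [hF, Finset.sum_apply] using this
    funext k
    exact Fintype.linearIndependent_iff.mp hθ x hx' k
  obtain ⟨L, hL⟩ := F.exists_leftInverse_of_injective hFinj
  -- expansion of L in coordinates
  have hLcoord : ∀ y : Fin n → ℚ, L y = ∑ j, y j • L (fun i => if j = i then 1 else 0) := by
    intro y
    conv_lhs => rw [pi_eq_sum_univ y]
    rw [map_sum]
    exact Finset.sum_congr rfl fun j _ => by rw [map_smul]
  set lam : Fin r → Fin n → ℚ := fun k0 j => L (fun i => if j = i then 1 else 0) k0 with hlam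
  have hdual : ∀ k k0 : Fin r, ∑ j, (θ k j : ℚ) * lam k0 j = if k = k0 then 1 else 0 := by
    intro k k0
    have h1 : L (F (fun i => if k = i then 1 else 0)) = fun i => if k = i then 1 else 0 := by
      have := congrFun (LinearMap.congr_fun hL (fun i => if k = i then 1 else 0))
      simpa using funext this
    have h2 : F (fun i => if k = i then 1 else 0) = fun j => (θ k j : ℚ) := by
      funext j
      simp [hF, ite_mul, Finset.sum_ite_eq]
    have h3 := congrFun (hLcoord (fun j => (θ k j : ℚ))) k0
    rw [← h2, h1] at h3
    simpa [hlam, Finset.sum_apply, smul_eq_mul] using h3.symm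
  -- α k0 lies in the ℚ-span of 1 and the β's
  set V := Submodule.span ℚ (Set.range (Fin.cons (1:ℂ) β)) with hV
  have hone : (1:ℂ) ∈ V := Submodule.subset_span ⟨0, rfl⟩
  have hbeta : ∀ k, β k ∈ V := fun k => Submodule.subset_span ⟨k.succ, rfl⟩
  have hS : ∀ j, (∑ k, α k * (θ k j : ℂ)) ∈ V := by
    intro j
    obtain ⟨M1, hM1⟩ := hrep j
    obtain ⟨M2, hM2⟩ := hrep' j
    have hSeq : ∑ k, α k * (θ k j : ℂ)
        = ∑ k, ((η k j : ℚ)) • β k + ((M2 - M1 : ℤ) : ℚ) • (1:ℂ) := by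
      have : ∑ k, α k * (θ k j : ℂ) = (∑ k, β k * (η k j : ℂ)) + ((M2 : ℂ) - (M1 : ℂ)) := by
        linear_combination hM2 - hM1
      rw [this]
      push_cast [Rat.smul_def]
      rw [Finset.sum_congr rfl fun k _ => by rw [mul_comm (β k)]]
      ring
    rw [hSeq]
    exact Submodule.add_mem _ (Submodule.sum_mem _ fun k _ => Submodule.smul_mem _ _ (hbeta k))
      (Submodule.smul_mem _ _ hone)
  have halpha : ∀ k0, α k0 ∈ V := by
    intro k0
    have hexp : α k0 = ∑ j, (lam k0 j : ℚ) • (∑ k, α k * (θ k j : ℂ)) := by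
      have h5 : ∑ j, (lam k0 j : ℚ) • (∑ k, α k * (θ k j : ℂ))
          = ∑ k, α k * ((∑ j, (θ k j : ℚ) * lam k0 j : ℚ) : ℂ) := by
        simp only [Rat.smul_def, Finset.mul_sum]
        push_cast
        rw [Finset.sum_comm]
        refine Finset.sum_congr rfl fun k _ => ?_
        rw [Finset.mul_sum]
        exact Finset.sum_congr rfl fun j _ => by ring
      simp only [hdual] at h5
      rw [h5]
      simp [apply_ite, mul_ite, Finset.sum_ite_eq']
    rw [hexp]
    exact Submodule.sum_mem _ fun j _ => Submodule.smul_mem _ _ (hS j)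
  -- span inclusion and dimension count
  have hsub : Set.range (Fin.cons (1:ℂ) α) ⊆ (V : Set ℂ) := by
    rintro x ⟨i, rfl⟩
    refine Fin.cases ?_ ?_ i
    · simpa using hone
    · intro k; simpa using halpha k
  have hle : Submodule.span ℚ (Set.range (Fin.cons (1:ℂ) α)) ≤ V :=
    Submodule.span_le.mpr hsub
  haveI : Module.Finite ℚ V := by
    rw [hV]
    exact FiniteDimensional.span_of_finite ℚ (Set.finite_range _)
  have hcard1 : Fintype.card (Fin (r+1)) = (Set.range (Fin.cons (1:ℂ) α)).finrank ℚ :=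
    linearIndependent_iff_card_eq_finrank_span.mp hindep
  have hle2 : (Set.range (Fin.cons (1:ℂ) α)).finrank ℚ
      ≤ (Set.range (Fin.cons (1:ℂ) β)).finrank ℚ :=
    Submodule.finrank_mono hle
  have hge : (Set.range (Fin.cons (1:ℂ) β)).finrank ℚ ≤ Fintype.card (Fin (r+1)) :=
    finrank_range_le_card _
  exact linearIndependent_iff_card_eq_finrank_span.mpr (le_antisymm (hcard1 ▸ hle2) hge)
end
end

section
/- Let α_1,…,α_r ∈ ℂ be rationally independent complex numbers that are also rationally independent with 1, and let θ^(1),…,θ^(r) ∈ ℤ^n be ℚ-linearly independent integer vectors. Then [φ] = [Σ_{k=1}^r α_k θ^(k)] ∈ (ℂ/ℤ)^n has toric degree exactly r. -/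
open scoped BigOperators
open Complex

noncomputable section

/-- If `α₁,…,α_r` are rationally independent and rationally independent with `1`, and the
`θ^(k)` are `ℚ`-linearly independent, then `[∑ α_k θ^(k)]` has toric degree `r`. -/
theorem stmt9 (n r : ℕ) (α : Fin r → ℂ) (hα : RatIndep α) (hα1 : RatIndepWithOne α)
    (θ : Fin r → Fin n → ℤ)
    (hθ : LinearIndependent ℚ (fun k : Fin r => fun j : Fin n => (θ k j : ℚ))) :
    HasToricDegree (fun j => ∑ k, α k * (θ k j : ℂ)) r := by
  constructor
  · exact ⟨α, θ, fun j => ⟨0, by simp⟩⟩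
  rintro s ⟨β, η, hrep⟩
  choose m hm using hrep
  -- The family `1, α 1, …, α r` is linearly independent over ℚ
  have hA : LinearIndependent ℚ (Fin.cons (1 : ℂ) α) := by
    rw [← LinearIndependent.iff_fractionRing (R := ℤ)]
    rw [Fintype.linearIndependent_iff]
    intro g hg
    have hg' : (g 0 : ℂ) + ∑ k, (g k.succ : ℂ) * α k = 0 := by
      rw [Fin.sum_univ_succ] at hg
      simpa [zsmul_eq_mul] using hg
    obtain ⟨h0, hsucc⟩ := hα1 (g 0) (fun k => g k.succ) hg'
    intro i
    refine Fin.cases h0 hsucc i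
  -- the subspace spanned by `1, β 1, …, β s`
  set W : Submodule ℚ ℂ := Submodule.span ℚ (Set.range (Fin.cons (1 : ℂ) β)) with hW
  have h1W : (1 : ℂ) ∈ W := Submodule.subset_span ⟨0, rfl⟩
  have hβW : ∀ l, β l ∈ W := fun l => Submodule.subset_span ⟨l.succ, rfl⟩
  -- each φ j lies in W
  have hψW : ∀ j, (∑ k, α k * (θ k j : ℂ)) ∈ W := by
    intro j
    have := hm j
    have h' : (∑ k, α k * (θ k j : ℂ)) = (m j : ℂ) + ∑ l, β l * (η l j : ℂ) :=
      sub_eq_iff_eq_add.mp this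
    have heq : (∑ k, α k * (θ k j : ℂ)) = ∑ l, ((η l j : ℚ)) • β l + ((m j : ℚ)) • (1 : ℂ) := by
      simp only [Rat.smul_def, Rat.cast_intCast, smul_eq_mul]
      rw [h', Finset.sum_congr rfl (fun l _ => mul_comm ((η l j : ℂ)) (β l))]
      ring
    rw [heq]
    exact W.add_mem (Submodule.sum_mem _ fun l _ => W.smul_mem _ (hβW l))
      (W.smul_mem _ h1W)
  -- left inverse of the matrix θ
  set T : (Fin r → ℚ) →ₗ[ℚ] (Fin n → ℚ) :=
    (Matrix.of fun j k => ((θ k j : ℚ))).mulVecLin with hT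
  have hTθ : ∀ k, T (Pi.single k 1) = fun j => (θ k j : ℚ) := by
    intro k
    funext j
    simp [hT, Matrix.mulVecLin_apply, Matrix.mulVec, dotProduct, Pi.single_apply]
  have hTinj : LinearMap.ker T = ⊥ := by
    rw [LinearMap.ker_eq_bot']
    intro v hv
    have h0 : ∑ k, v k • (fun j : Fin n => (θ k j : ℚ)) = 0 := by
      funext j
      have : T v j = 0 := by rw [hv]; rfl
      simpa [hT, Matrix.mulVecLin_apply, Matrix.mulVec, dotProduct,
        Finset.sum_apply, mul_comm] using this
    have := Fintype.linearIndependent_iff.mp hθ v h0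
    funext k; exact this k
  obtain ⟨g, hg⟩ := T.exists_leftInverse_of_injective hTinj
  -- each α k lies in W
  have hαW : ∀ k, α k ∈ W := by
    intro k
    set c : Fin n → ℚ := fun j => g (Pi.single j 1) k with hc
    have hdel : ∀ k' : Fin r, ∑ j, c j * (θ k' j : ℚ) = if k' = k then 1 else 0 := by
      intro k'
      have h1 : ∑ j, (θ k' j : ℚ) • (Pi.single j (1:ℚ) : Fin n → ℚ) = fun j => (θ k' j : ℚ) := by
        funext j
        simp [Pi.single_apply, Finset.sum_apply]
      have h2 : g (fun j => (θ k' j : ℚ)) = Pi.single k' 1 := by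
        rw [← hTθ k']
        have := LinearMap.congr_fun hg (Pi.single k' (1:ℚ))
        simpa using this
      calc ∑ j, c j * (θ k' j : ℚ) = ∑ j, ((θ k' j : ℚ) • g (Pi.single j 1)) k := by
            simp [hc, Finset.sum_apply, mul_comm]
        _ = g (∑ j, (θ k' j : ℚ) • (Pi.single j (1:ℚ) : Fin n → ℚ)) k := by
            rw [map_sum]; simp [Finset.sum_apply]
        _ = (Pi.single k' (1:ℚ) : Fin r → ℚ) k := by rw [h1, h2]
        _ = if k' = k then 1 else 0 := by simp [Pi.single_apply, eq_comm]
    have hαk : (∑ j, (c j : ℂ) * (∑ k', α k' * (θ k' j : ℂ))) = α k := by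
      calc ∑ j, (c j : ℂ) * (∑ k', α k' * (θ k' j : ℂ))
          = ∑ j, ∑ k', (c j : ℂ) * (α k' * (θ k' j : ℂ)) :=
            Finset.sum_congr rfl fun j _ => Finset.mul_sum _ _ _
        _ = ∑ k', ∑ j, (c j : ℂ) * (α k' * (θ k' j : ℂ)) := Finset.sum_comm
        _ = ∑ k', ((∑ j, c j * (θ k' j : ℚ) : ℚ) : ℂ) * α k' := by
            refine Finset.sum_congr rfl fun k' _ => ?_
            push_cast
            rw [Finset.sum_mul]
            exact Finset.sum_congr rfl fun j _ => by ring
        _ = ∑ k', (if k' = k then 1 else 0 : ℂ) * α k' := by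
            refine Finset.sum_congr rfl fun k' _ => ?_
            rw [hdel k']
            split <;> simp
        _ = α k := by simp
    rw [← hαk]
    exact Submodule.sum_mem _ fun j _ => by
      simpa [Rat.smul_def] using W.smul_mem (c j) (hψW j)
  -- span of 1, α ≤ W
  have hle : Submodule.span ℚ (Set.range (Fin.cons (1 : ℂ) α)) ≤ W := by
    rw [Submodule.span_le]
    rintro x ⟨i, rfl⟩
    refine Fin.cases ?_ ?_ i
    · exact h1W
    · exact fun k => hαW k
  have hWfin : FiniteDimensional ℚ W := by
    rw [hW]
    exact FiniteDimensional.span_of_finite ℚ (Set.finite_range _)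
  have h1 : Module.finrank ℚ (Submodule.span ℚ (Set.range (Fin.cons (1 : ℂ) α))) = r + 1 := by
    rw [finrank_span_eq_card hA, Fintype.card_fin]
  have h2 : Module.finrank ℚ W ≤ s + 1 := by
    have := finrank_range_le_card (R := ℚ) (Fin.cons (1 : ℂ) β)
    simpa [Set.finrank, hW] using this
  have h3 := Submodule.finrank_mono hle
  omega
end
end

section
/- Let α_1,…,α_r ∈ ℂ be rationally independent but rationally dependent with 1, and let θ^(1),…,θ^(r) ∈ ℤ^n be ℚ-linearly independent. Then [φ] = [Σ_{k=1}^r α_k θ^(k)] has toric degree r−1 or r. -/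
open scoped BigOperators
open Complex

noncomputable section

/-! Any toric representation `[φ] = [∑ β_l η^(l)]` of length `s` puts every `φ_j` in the
`ℚ`-span of `1, β_1, …, β_s`. For `φ = ∑ α_k θ^(k)` the `φ_j` are the images of the columns of
the rank-`r` matrix `θ` under the injective map `c ↦ ∑ c_k α_k`, so they span a space of
dimension `r`; hence `r ≤ s + 1`, while `(α, θ)` itself is a representation of length `r`. -/

lemma RatIndep.linearIndependent {r : ℕ} {α : Fin r → ℂ} (hα : RatIndep α) :
    LinearIndependent ℚ α := by
  rw [← LinearIndependent.iff_fractionRing ℤ ℚ, Fintype.linearIndependent_iff]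
  intro c hc
  exact hα c (by simpa only [zsmul_eq_mul] using hc)

lemma isToricRep_sum_mul {n r : ℕ} (α : Fin r → ℂ) (θ : Fin r → Fin n → ℤ) :
    IsToricRep (fun j => ∑ k, α k * (θ k j : ℂ)) α θ :=
  fun _ => ⟨0, by simp⟩

lemma IsToricRep.finrank_span_le {n s : ℕ} {φ : Fin n → ℂ} {β : Fin s → ℂ}
    {η : Fin s → Fin n → ℤ} (hrep : IsToricRep φ β η) :
    Module.finrank ℚ (Submodule.span ℚ (Set.range φ)) ≤ s + 1 := by
  set b : Fin (s + 1) → ℂ := Fin.cons 1 β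
  set V := Submodule.span ℚ (Set.range b)
  have : FiniteDimensional ℚ V := FiniteDimensional.span_of_finite ℚ (Set.finite_range b)
  have hmem : ∀ i, b i ∈ V := fun i => Submodule.subset_span ⟨i, rfl⟩
  have hle : Submodule.span ℚ (Set.range φ) ≤ V := by
    rw [Submodule.span_le]
    rintro _ ⟨j, rfl⟩
    obtain ⟨m, hm⟩ := hrep j
    have hφj : φ j = (m : ℚ) • b 0 + ∑ l, (η l j : ℚ) • b l.succ := by
      rw [sub_eq_iff_eq_add] at hm
      simp only [hm, b, Fin.cons_zero, Fin.cons_succ, Rat.smul_def]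
      push_cast
      simp only [mul_one, mul_comm]
    rw [hφj]
    exact V.add_mem (V.smul_mem _ (hmem 0)) (V.sum_mem fun l _ => V.smul_mem _ (hmem l.succ))
  calc Module.finrank ℚ (Submodule.span ℚ (Set.range φ))
      ≤ Module.finrank ℚ V := Submodule.finrank_mono hle
    _ ≤ s + 1 := (finrank_range_le_card b).trans_eq (Fintype.card_fin _)

lemma finrank_span_range_sum_smul {n r : ℕ} {α : Fin r → ℂ} (hα : LinearIndependent ℚ α)
    {θ : Fin r → Fin n → ℚ} (hθ : LinearIndependent ℚ θ) :
    Module.finrank ℚ (Submodule.span ℚ (Set.range fun j => ∑ k, θ k j • α k)) = r := by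
  set L := Fintype.linearCombination ℚ α
  have hL : Function.Injective L :=
    linearIndependent_iff_injective_fintypeLinearCombination.mp hα
  have hrange : (Set.range fun j => ∑ k, θ k j • α k) = L '' Set.range (Matrix.of θ).col := by
    rw [← Set.range_comp]
    rfl
  rw [hrange, Submodule.span_image,
    ← LinearEquiv.finrank_eq (Submodule.equivMapOfInjective L hL _),
    ← Matrix.rank_eq_finrank_span_cols, LinearIndependent.rank_matrix (M := Matrix.of θ) hθ,
    Fintype.card_fin]

lemma IsToricRep.le_succ_of_linearIndependent {n r s : ℕ} {α : Fin r → ℂ}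
    (hα : LinearIndependent ℚ α)
    {θ : Fin r → Fin n → ℤ} (hθ : LinearIndependent ℚ (fun k j => (θ k j : ℚ)))
    {β : Fin s → ℂ} {η : Fin s → Fin n → ℤ}
    (hrep : IsToricRep (fun j => ∑ k, α k * (θ k j : ℂ)) β η) : r ≤ s + 1 := by
  have hφ : (fun j => ∑ k, α k * (θ k j : ℂ)) = fun j => ∑ k, (θ k j : ℚ) • α k := by
    simp only [Rat.smul_def, Rat.cast_intCast, mul_comm]
  rw [← finrank_span_range_sum_smul hα hθ, ← hφ]
  exact hrep.finrank_span_le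

lemma exists_hasToricDegree_le {n r : ℕ} {φ : Fin n → ℂ}
    (h : ∃ (α : Fin r → ℂ) (θ : Fin r → Fin n → ℤ), IsToricRep φ α θ) :
    ∃ d ≤ r, HasToricDegree φ d := by
  classical
  have hex : ∃ s, ∃ (α : Fin s → ℂ) (θ : Fin s → Fin n → ℤ), IsToricRep φ α θ := ⟨r, h⟩
  exact ⟨Nat.find hex, Nat.find_le h, Nat.find_spec hex, fun _ hs => Nat.find_le hs⟩

theorem stmt10_general (n r : ℕ) (α : Fin r → ℂ) (hα : RatIndep α)
    (θ : Fin r → Fin n → ℤ)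
    (hθ : LinearIndependent ℚ (fun k : Fin r => fun j : Fin n => (θ k j : ℚ))) :
    ∃ s : ℕ, (s = r - 1 ∨ s = r) ∧
      HasToricDegree (fun j => ∑ k, α k * (θ k j : ℂ)) s := by
  obtain ⟨d, hdr, hd⟩ := exists_hasToricDegree_le ⟨α, θ, isToricRep_sum_mul α θ⟩
  obtain ⟨β, η, hrep⟩ := hd.1
  have hrd : r ≤ d + 1 := hrep.le_succ_of_linearIndependent hα.linearIndependent hθ
  exact ⟨d, by omega, hd⟩

/-- If `α₁,…,α_r` are rationally independent but rationally dependent with `1`, and the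
`θ^(k)` are `ℚ`-linearly independent, then `[∑ α_k θ^(k)]` has toric degree `r-1` or `r`. -/
theorem stmt10 (n r : ℕ) (α : Fin r → ℂ) (hα : RatIndep α)
    (hdep : ∃ (c : Fin r → ℤ) (c0 : ℤ), (¬ (c0 = 0 ∧ ∀ k, c k = 0)) ∧
      ∑ k, (c k : ℂ) * α k = (c0 : ℂ))
    (θ : Fin r → Fin n → ℤ)
    (hθ : LinearIndependent ℚ (fun k : Fin r => fun j : Fin n => (θ k j : ℚ))) :
    ∃ s : ℕ, (s = r - 1 ∨ s = r) ∧
      HasToricDegree (fun j => ∑ k, α k * (θ k j : ℂ)) s :=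
  stmt10_general n r α hα θ hθ
end
end

section
/- Let [φ] ∈ (ℂ/ℤ)^n with [φ] = [(1/m)η^(1) + Σ_{k=2}^r β_k η^(k)], where m ≥ 2, η^(k) ∈ ℤ^n, and 1,β_2,…,β_r are ℚ-linearly independent. Then for every j, Res_j([φ]) = {Q ∈ ℕ^n : |Q| ≥ 2, ⟨Q − e_j, η^(1)⟩ ∈ mℤ} ∩ ∩_{k=2}^r Res_j^+(η^(k)); in particular ∩_{k=1}^r Res_j^+(η^(k)) ⊆ Res_j([φ]) ⊆ ∩_{k=2}^r Res_j^+(η^(k)). -/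
open scoped BigOperators
open Complex

noncomputable section

/-! Write `φ = M + ∑ k, β k • η k` with `M` integral. Then `⟨Q, φ⟩ - φ j` agrees modulo `ℤ` with
`∑ k, β k * c k`, where `c k = ⟨Q, η k⟩ - η k j ∈ ℤ`. Since `β 0 = 1/m` and `1, β 1, …` are
rationally independent, multiplying by `m` shows that this is an integer exactly when `m ∣ c 0`
and `c k = 0` for `k ≠ 0`. -/

def resonanceDefect {n : ℕ} (θ : Fin n → ℤ) (Q : Fin n → ℕ) (j : Fin n) : ℤ :=
  ∑ h, (Q h : ℤ) * θ h - θ j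

theorem mem_resPlus_iff {n : ℕ} {θ : Fin n → ℤ} {j : Fin n} {Q : Fin n → ℕ} :
    Q ∈ ResPlus θ j ↔ 2 ≤ ∑ h, Q h ∧ resonanceDefect θ Q j = 0 := by
  simp only [ResPlus, resonanceDefect, Set.mem_ofPred_eq, sub_eq_zero]

theorem IsToricRep.exists_sub_eq_sum_resonanceDefect {n r : ℕ} {φ : Fin n → ℂ}
    {α : Fin r → ℂ} {θ : Fin r → Fin n → ℤ} (hrep : IsToricRep φ α θ)
    (Q : Fin n → ℕ) (j : Fin n) :
    ∃ T : ℤ, (∑ h, (Q h : ℂ) * φ h) - φ j = ∑ k, α k * resonanceDefect (θ k) Q j + T := by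
  choose M hM using hrep
  have hφ : ∀ h, φ h = M h + ∑ k, α k * θ k h := fun h => by linear_combination hM h
  refine ⟨∑ h, (Q h : ℤ) * M h - M j, ?_⟩
  simp only [hφ, resonanceDefect, mul_add, Finset.sum_add_distrib, Finset.mul_sum]
  rw [Finset.sum_comm]
  push_cast
  simp only [mul_sub, Finset.sum_sub_distrib, Finset.mul_sum, mul_left_comm (Q _ : ℂ)]
  ring

theorem IsToricRep.mem_resMod_iff {n r : ℕ} {φ : Fin n → ℂ} {α : Fin r → ℂ}
    {θ : Fin r → Fin n → ℤ} (hrep : IsToricRep φ α θ) (Q : Fin n → ℕ) (j : Fin n) :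
    Q ∈ ResMod φ j ↔
      2 ≤ ∑ h, Q h ∧ ∃ w : ℤ, ∑ k, α k * resonanceDefect (θ k) Q j = w := by
  obtain ⟨T, hT⟩ := hrep.exists_sub_eq_sum_resonanceDefect Q j
  simp only [ResMod, Set.mem_ofPred_eq, hT]
  refine and_congr_right fun _ => ⟨fun ⟨w, hw⟩ => ⟨w - T, ?_⟩, fun ⟨w, hw⟩ => ⟨w + T, ?_⟩⟩
  · push_cast; linear_combination hw
  · push_cast; linear_combination hw

theorem exists_int_eq_sum_mul_iff {ι : Type*} [Fintype ι] [DecidableEq ι] {β : ι → ℂ}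
    {i₀ : ι} {m : ℕ} (hm : m ≠ 0) (hβ₀ : β i₀ = 1 / (m : ℂ))
    (hindep : ∀ (c₀ : ℤ) (c : ι → ℤ), c i₀ = 0 →
      (c₀ : ℂ) + ∑ k, (c k : ℂ) * β k = 0 → c₀ = 0 ∧ ∀ k, c k = 0)
    (c : ι → ℤ) :
    (∃ w : ℤ, ∑ k, β k * c k = w) ↔ (m : ℤ) ∣ c i₀ ∧ ∀ k ≠ i₀, c k = 0 := by
  have hmC : (m : ℂ) ≠ 0 := Nat.cast_ne_zero.mpr hm
  have hsplit : ∑ k, β k * c k = c i₀ / m + ∑ k ∈ Finset.univ.erase i₀, β k * c k := by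
    rw [← Finset.add_sum_erase _ _ (Finset.mem_univ i₀), hβ₀, one_div_mul_eq_div]
  constructor
  · rintro ⟨w, hw⟩
    -- clearing the denominator `m` gives an integer relation among `1` and the `β k`, `k ≠ i₀`
    set d : ι → ℤ := fun k => if k = i₀ then 0 else m * c k
    have hd : ∑ k, (d k : ℂ) * β k = m * ∑ k ∈ Finset.univ.erase i₀, β k * c k := by
      rw [← Finset.add_sum_erase _ _ (Finset.mem_univ i₀), Finset.mul_sum]
      simp only [d, if_pos rfl, Int.cast_zero, zero_mul, zero_add]
      refine Finset.sum_congr rfl fun k hk => ?_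
      rw [if_neg (Finset.ne_of_mem_erase hk)]
      push_cast
      ring
    have hrel : ((c i₀ - m * w : ℤ) : ℂ) + ∑ k, (d k : ℂ) * β k = 0 := by
      rw [hsplit] at hw
      rw [hd]
      push_cast
      rw [← hw]
      field_simp
      ring
    obtain ⟨h₀, hk⟩ := hindep _ d (if_pos rfl) hrel
    refine ⟨⟨w, by linarith⟩, fun k hk₀ => ?_⟩
    simpa only [d, if_neg hk₀, mul_eq_zero, Nat.cast_eq_zero, hm, false_or] using hk k
  · rintro ⟨⟨z, hz⟩, hk⟩
    refine ⟨z, ?_⟩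
    rw [hsplit, Finset.sum_eq_zero fun k hk' => by rw [hk k (Finset.ne_of_mem_erase hk')]; simp,
      hz, add_zero]
    push_cast
    field_simp

/-- Resonances of `[φ]` with a reduced toric representation: description and the
resulting inclusions. -/
theorem stmt17 (n r : ℕ) (hr : 0 < r) (φ : Fin n → ℂ)
    (β : Fin r → ℂ) (η : Fin r → Fin n → ℤ) (m : ℕ) (hm : 2 ≤ m)
    (hrep : IsToricRep φ β η) (hβ0 : β ⟨0, hr⟩ = 1 / (m : ℂ))
    (hindep : ∀ (c0 : ℤ) (c : Fin r → ℤ), c ⟨0, hr⟩ = 0 →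
      (c0 : ℂ) + ∑ k, (c k : ℂ) * β k = 0 → c0 = 0 ∧ ∀ k, c k = 0)
    (j : Fin n) :
    ResMod φ j =
      ({Q : Fin n → ℕ | 2 ≤ ∑ h, Q h ∧
          ∃ z : ℤ, (∑ h, (Q h : ℤ) * η ⟨0, hr⟩ h) - η ⟨0, hr⟩ j = (m : ℤ) * z} ∩
        ⋂ (k : Fin r) (_ : k ≠ (⟨0, hr⟩ : Fin r)), ResPlus (η k) j) ∧
    (⋂ k : Fin r, ResPlus (η k) j) ⊆ ResMod φ j ∧
    ResMod φ j ⊆ ⋂ (k : Fin r) (_ : k ≠ (⟨0, hr⟩ : Fin r)), ResPlus (η k) j := by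
  set i₀ : Fin r := ⟨0, hr⟩
  have hres : ∀ Q, Q ∈ ResMod φ j ↔ 2 ≤ ∑ h, Q h ∧
      (m : ℤ) ∣ resonanceDefect (η i₀) Q j ∧ ∀ k ≠ i₀, resonanceDefect (η k) Q j = 0 :=
    fun Q => by rw [hrep.mem_resMod_iff, exists_int_eq_sum_mul_iff (by omega) hβ0 hindep]
  have hchar : ResMod φ j = {Q : Fin n → ℕ | 2 ≤ ∑ h, Q h ∧
      ∃ z : ℤ, (∑ h, (Q h : ℤ) * η i₀ h) - η i₀ j = (m : ℤ) * z} ∩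
      ⋂ (k : Fin r) (_ : k ≠ i₀), ResPlus (η k) j := by
    ext Q
    simp only [hres, Set.mem_inter_iff, Set.mem_iInter, Set.mem_ofPred_eq, mem_resPlus_iff]
    exact ⟨fun ⟨h2, hdvd, hk⟩ => ⟨⟨h2, hdvd⟩, fun k hk₀ => ⟨h2, hk k hk₀⟩⟩,
      fun ⟨⟨h2, hdvd⟩, hk⟩ => ⟨h2, hdvd, fun k hk₀ => (hk k hk₀).2⟩⟩
  refine ⟨hchar, fun Q hQ => ?_, fun Q hQ => (hchar ▸ hQ).2⟩
  simp only [Set.mem_iInter, mem_resPlus_iff] at hQ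
  exact (hres Q).2 ⟨(hQ i₀).1, (hQ i₀).2 ▸ dvd_zero _, fun k _ => (hQ k).2⟩
end
end

section
/- Let [φ] ∈ (ℂ/ℤ)^n with [φ] = [(1/m)η^(1) + Σ_{k=2}^r β_k η^(k)] = [(1/m̃)ξ^(1) + Σ_{k=2}^r γ_k ξ^(k)] two reduced representations of the same toric degree r (m, m̃ ≥ 2, toric vectors in ℤ^n, and both 1,β_2,…,β_r and 1,γ_2,…,γ_r ℚ-linearly independent, with the η's and ξ's each ℚ-linearly independent families). Then ∩_{k=2}^r Res_j^+(η^(k)) = ∩_{k=2}^r Res_j^+(ξ^(k)) for every j = 1,…,n. -/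
open scoped BigOperators
open Complex

noncomputable section

private lemma stmt18_key {n r : ℕ} (hr : 0 < r) (φ : Fin n → ℂ)
    (β γ : Fin r → ℂ) (η ξ : Fin r → Fin n → ℤ) (m mt : ℕ)
    (hm : m ≠ 0) (hmt : mt ≠ 0)
    (hrepη : IsToricRep φ β η) (hrepξ : IsToricRep φ γ ξ)
    (hβ0 : β ⟨0, hr⟩ = 1 / (m : ℂ)) (hγ0 : γ ⟨0, hr⟩ = 1 / (mt : ℂ))
    (hγind : ∀ (c0 : ℤ) (c : Fin r → ℤ), c ⟨0, hr⟩ = 0 →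
      (c0 : ℂ) + ∑ k, (c k : ℂ) * γ k = 0 → c0 = 0 ∧ ∀ k, c k = 0)
    (j : Fin n) (Q : Fin n → ℕ)
    (hQ : ∀ k, k ≠ (⟨0, hr⟩ : Fin r) → ∑ h, (Q h : ℤ) * η k h = η k j) :
    ∀ k, k ≠ (⟨0, hr⟩ : Fin r) → ∑ h, (Q h : ℤ) * ξ k h = ξ k j := by
  classical
  choose a ha using hrepη
  choose b hb using hrepξ
  have hφa : ∀ h, φ h = (∑ k, β k * (η k h : ℂ)) + (a h : ℂ) := fun h => by
    linear_combination ha h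
  have hφb : ∀ h, φ h = (∑ k, γ k * (ξ k h : ℂ)) + (b h : ℂ) := fun h => by
    linear_combination hb h
  set c : Fin r → ℤ := fun k => (∑ h, (Q h : ℤ) * η k h) - η k j with hc
  set d : Fin r → ℤ := fun k => (∑ h, (Q h : ℤ) * ξ k h) - ξ k j with hd
  set A : ℤ := (∑ h, (Q h : ℤ) * a h) - a j with hA
  set B : ℤ := (∑ h, (Q h : ℤ) * b h) - b j with hB
  have genl : ∀ (δ : Fin r → ℂ) (θ : Fin r → Fin n → ℤ) (w : Fin n → ℤ),
      (∀ h, φ h = (∑ k, δ k * (θ k h : ℂ)) + (w h : ℂ)) →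
      (∑ h, (Q h : ℂ) * φ h) - φ j =
        (∑ k, (((∑ h, (Q h : ℤ) * θ k h) - θ k j : ℤ) : ℂ) * δ k)
          + (((∑ h, (Q h : ℤ) * w h) - w j : ℤ) : ℂ) := by
    intro δ θ w hw
    have s1 : ∑ h, (Q h : ℂ) * φ h
        = (∑ k, δ k * ∑ h, (Q h : ℂ) * (θ k h : ℂ)) + ∑ h, (Q h : ℂ) * (w h : ℂ) := by
      simp only [hw, mul_add, Finset.sum_add_distrib, Finset.mul_sum]
      congr 1
      rw [Finset.sum_comm]
      refine Finset.sum_congr rfl fun k _ => Finset.sum_congr rfl fun h _ => by ring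
    push_cast
    calc (∑ h, (Q h : ℂ) * φ h) - φ j
        = ((∑ k, δ k * ∑ h, (Q h : ℂ) * (θ k h : ℂ)) + ∑ h, (Q h : ℂ) * (w h : ℂ))
            - ((∑ k, δ k * (θ k j : ℂ)) + (w j : ℂ)) := by rw [s1, hw j]
      _ = (∑ k, ((∑ h, (Q h : ℂ) * (θ k h : ℂ)) - (θ k j : ℂ)) * δ k)
            + ((∑ h, (Q h : ℂ) * (w h : ℂ)) - (w j : ℂ)) := by
          rw [show (∑ k, ((∑ h, (Q h : ℂ) * (θ k h : ℂ)) - (θ k j : ℂ)) * δ k)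
              = ∑ k, (δ k * (∑ h, (Q h : ℂ) * (θ k h : ℂ)) - δ k * (θ k j : ℂ)) from
            Finset.sum_congr rfl fun k _ => by ring]
          rw [Finset.sum_sub_distrib]
          ring
  have E1 := genl β η a hφa
  have E2 := genl γ ξ b hφb
  have hcz : ∀ k, k ≠ (⟨0, hr⟩ : Fin r) → c k = 0 := fun k hk => by
    simp [hc, hQ k hk]
  have hcsum : (∑ k, ((c k : ℤ) : ℂ) * β k) = (c ⟨0, hr⟩ : ℂ) * (1 / (m : ℂ)) := by
    rw [← hβ0]
    exact Finset.sum_eq_single_of_mem _ (Finset.mem_univ _)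
      (fun k _ hk => by rw [hcz k hk]; simp)
  -- main equation over ℂ
  have E : (c ⟨0, hr⟩ : ℂ) * (1 / (m : ℂ)) + (A : ℂ)
      = (∑ k, (d k : ℂ) * γ k) + (B : ℂ) := by
    rw [← hcsum]
    calc (∑ k, ((c k : ℤ) : ℂ) * β k) + (A : ℂ)
        = (∑ h, (Q h : ℂ) * φ h) - φ j := by rw [E1]
      _ = (∑ k, (d k : ℂ) * γ k) + (B : ℂ) := by rw [E2]
  -- build the integer relation for γ
  set c0' : ℤ := mt * c ⟨0, hr⟩ + m * mt * (A - B) - m * d ⟨0, hr⟩ with hc0'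
  set e : Fin r → ℤ := fun k => if k = (⟨0, hr⟩ : Fin r) then 0 else -((m : ℤ) * mt * d k) with he
  have hrel : (c0' : ℂ) + ∑ k, (e k : ℂ) * γ k = 0 := by
    have hsum : ∑ k, (e k : ℂ) * γ k
        = (m : ℂ) * (d ⟨0, hr⟩ : ℂ) - (m : ℂ) * mt * ∑ k, (d k : ℂ) * γ k := by
      rw [Finset.mul_sum, eq_sub_iff_add_eq, ← Finset.sum_add_distrib]
      have : ∀ k ∈ (Finset.univ : Finset (Fin r)),
          (e k : ℂ) * γ k + (m : ℂ) * mt * ((d k : ℂ) * γ k)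
            = if k = (⟨0, hr⟩ : Fin r) then (m : ℂ) * (d ⟨0, hr⟩ : ℂ) else 0 := by
        intro k _
        by_cases hk : k = (⟨0, hr⟩ : Fin r)
        · subst hk
          have hmtC : (mt : ℂ) ≠ 0 := Nat.cast_ne_zero.mpr hmt
          simp only [he, if_pos rfl, hγ0]
          push_cast
          field_simp
          ring
        · simp only [he, if_neg hk]
          push_cast
          ring
      rw [Finset.sum_congr rfl this, Finset.sum_ite_eq' Finset.univ (⟨0, hr⟩ : Fin r)]
      simp
    rw [hsum, hc0']
    have hmC : (m : ℂ) ≠ 0 := Nat.cast_ne_zero.mpr hm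
    have hm1 : (m : ℂ) * (1 / (m : ℂ)) = 1 := by field_simp
    push_cast
    linear_combination ((m : ℂ) * mt) * E - ((mt : ℂ) * ((c ⟨0, hr⟩ : ℤ) : ℂ)) * hm1
  obtain ⟨-, hek⟩ := hγind c0' e (by simp [he]) hrel
  intro k hk
  have := hek k
  simp only [he, if_neg hk, neg_eq_zero, mul_eq_zero] at this
  have hdk : d k = 0 := by
    rcases this with (h1 | h2) | h3
    · exact absurd h1 (by exact_mod_cast hm)
    · exact absurd h2 (by exact_mod_cast hmt)
    · exact h3
  have := hdk
  simp only [hd, sub_eq_zero] at this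
  exact this

/-- Two reduced toric representations of the same `[φ]` yield the same intersections of
additive resonances of the torsion-free toric vectors. -/
theorem stmt18 (n r : ℕ) (hr : 0 < r) (φ : Fin n → ℂ) (hdeg : HasToricDegree φ r)
    (β γ : Fin r → ℂ) (η ξ : Fin r → Fin n → ℤ) (m mt : ℕ)
    (hm : 2 ≤ m) (hmt : 2 ≤ mt)
    (hrepη : IsToricRep φ β η) (hrepξ : IsToricRep φ γ ξ)
    (hβ0 : β ⟨0, hr⟩ = 1 / (m : ℂ)) (hγ0 : γ ⟨0, hr⟩ = 1 / (mt : ℂ))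
    (hβind : ∀ (c0 : ℤ) (c : Fin r → ℤ), c ⟨0, hr⟩ = 0 →
      (c0 : ℂ) + ∑ k, (c k : ℂ) * β k = 0 → c0 = 0 ∧ ∀ k, c k = 0)
    (hγind : ∀ (c0 : ℤ) (c : Fin r → ℤ), c ⟨0, hr⟩ = 0 →
      (c0 : ℂ) + ∑ k, (c k : ℂ) * γ k = 0 → c0 = 0 ∧ ∀ k, c k = 0)
    (hηli : LinearIndependent ℚ (fun k : Fin r => fun j : Fin n => (η k j : ℚ)))
    (hξli : LinearIndependent ℚ (fun k : Fin r => fun j : Fin n => (ξ k j : ℚ)))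
    (j : Fin n) :
    (⋂ (k : Fin r) (_ : k ≠ (⟨0, hr⟩ : Fin r)), ResPlus (η k) j) =
      ⋂ (k : Fin r) (_ : k ≠ (⟨0, hr⟩ : Fin r)), ResPlus (ξ k) j := by
  ext Q
  simp only [Set.mem_iInter, ResPlus, Set.mem_setOf_eq]
  constructor
  · intro H k hk
    exact ⟨(H k hk).1,
      stmt18_key hr φ β γ η ξ m mt (by omega) (by omega) hrepη hrepξ hβ0 hγ0 hγind j Q
        (fun k hk => (H k hk).2) k hk⟩
  · intro H k hk
    exact ⟨(H k hk).1,
      stmt18_key hr φ γ β ξ η mt m (by omega) (by omega) hrepξ hrepη hγ0 hβ0 hβind j Q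
        (fun k hk => (H k hk).2) k hk⟩
end
end

section
/- Let A ⊆ ℤ^n be a subgroup (ℤ-submodule) and A^+ = A ∩ ℕ^n. Then A^+ contains only finitely many minimal elements with respect to the partial order in which A ⊑ B when supp(A) ⊊ supp(B), or supp(A) = supp(B) and A ≤ B lexicographically; moreover any two minimal elements of A^+ \ {0} have distinct supports. -/
open scoped BigOperators
open Complex

noncomputable section

/-- The support of an integer vector. -/
def supp {n : ℕ} (v : Fin n → ℤ) : Set (Fin n) := {j | v j ≠ 0}

/-- Lexicographic order on integer vectors. -/
def LexLe {n : ℕ} (A B : Fin n → ℤ) : Prop :=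
  A = B ∨ ∃ j, A j < B j ∧ ∀ i, i < j → A i = B i

/-- The partial order: smaller support, or equal support and lexicographically smaller. -/
def SqLe {n : ℕ} (A B : Fin n → ℤ) : Prop :=
  supp A ⊂ supp B ∨ (supp A = supp B ∧ LexLe A B)

/-- `M` is a minimal (nonzero) element of `S` for the order `SqLe`. -/
def IsMinimalIn {n : ℕ} (S : Set (Fin n → ℤ)) (M : Fin n → ℤ) : Prop :=
  M ∈ S ∧ M ≠ 0 ∧ ∀ B ∈ S, B ≠ 0 → SqLe B M → B = M

/-- `A⁺ = A ∩ ℕ^n` has finitely many minimal elements, and two distinct minimal elements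
have distinct supports. -/
theorem stmt19 (n : ℕ) (A : AddSubgroup (Fin n → ℤ)) :
    {M | IsMinimalIn {v : Fin n → ℤ | v ∈ A ∧ ∀ j, 0 ≤ v j} M}.Finite ∧
    ∀ M P : Fin n → ℤ,
      IsMinimalIn {v : Fin n → ℤ | v ∈ A ∧ ∀ j, 0 ≤ v j} M →
      IsMinimalIn {v : Fin n → ℤ | v ∈ A ∧ ∀ j, 0 ≤ v j} P →
      M ≠ P → supp M ≠ supp P := by
  have lexTotal : ∀ (X Y : Fin n → ℤ), LexLe X Y ∨ LexLe Y X := by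
    intro X Y
    by_cases h : X = Y
    · exact Or.inl (Or.inl h)
    · have hne : (Finset.univ.filter fun j => X j ≠ Y j).Nonempty := by
        rcases Function.ne_iff.mp h with ⟨j, hj⟩
        exact ⟨j, by simpa using hj⟩
      set s := Finset.univ.filter fun j => X j ≠ Y j with hs
      set j := s.min' hne with hj
      have hjmem : j ∈ s := s.min'_mem hne
      have hjne : X j ≠ Y j := by
        have := hjmem; simp [hs] at this; exact this
      have heq : ∀ i, i < j → X i = Y i := by
        intro i hi
        by_contra hne'
        have : i ∈ s := by simp [hs, hne']
        exact absurd (s.min'_le i this) (not_le.mpr hi)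
      rcases lt_or_gt_of_ne hjne with hlt | hgt
      · exact Or.inl (Or.inr ⟨j, hlt, heq⟩)
      · exact Or.inr (Or.inr ⟨j, hgt, fun i hi => (heq i hi).symm⟩)
  have key : ∀ M P : Fin n → ℤ,
      IsMinimalIn {v : Fin n → ℤ | v ∈ A ∧ ∀ j, 0 ≤ v j} M →
      IsMinimalIn {v : Fin n → ℤ | v ∈ A ∧ ∀ j, 0 ≤ v j} P →
      supp M = supp P → M = P := by
    intro M P hM hP hsupp
    rcases lexTotal M P with h | h
    · exact hP.2.2 M hM.1 hM.2.1 (Or.inr ⟨hsupp, h⟩)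
    · exact (hM.2.2 P hP.1 hP.2.1 (Or.inr ⟨hsupp.symm, h⟩)).symm
  constructor
  · apply Set.Finite.of_finite_image (f := supp)
    · exact Set.toFinite _
    · intro M hM P hP h
      exact key M P hM hP h
  · intro M P hM hP hMP hsupp
    exact hMP (key M P hM hP hsupp)
end
end
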